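/- For every integer d ≥ 2 there exist an integer d′ and a Kraus family E_1,…,E_n of d′×(2d) complex matrices with ∑_k E_k†E_k = I_{2d}, in which every E_k has rank at most one (so the channel E is entanglement-breaking), such that: (a) for every m ≥ 1 and all unit vectors ψ, φ ∈ (ℂ^{2d})^{⊗m}, tr[E^{⊗m}(|ψ⟩⟨ψ|)·E^{⊗m}(|φ⟩⟨φ|)] ≠ 0 (hence C^{(0)}(E) = 0); and (b) there exist d unit vectors v_1,…,v_d ∈ ℂ²⊗ℂ^{2d} such that tr[(id₂⊗E)(|v_i⟩⟨v_i|)·(id₂⊗E)(|v_j⟩⟨v_j|)] = 0 whenever i ≠ j, where id₂⊗E is the channel with Kraus operators {I₂ ⊗ E_k} (hence C^{(0)}(id₂⊗E) ≥ log₂ d while C^{(0)}(id₂) + C^{(0)}(E) = 1). -/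

import Mathlib

/-!
The Kraus operators are `E_q = |g_q⟩⟨χ_ℓ ⊗ e_c|`, `q = (c, ℓ)`, where `c` runs over `d` blocks and
`χ_ℓ` over the two qubit bases `{|0⟩, |1⟩}` and `{|0⟩ + |1⟩, |0⟩ - |1⟩}`. As
`tr[E(ψψ*) E(φφ*)] = ∑_{k,l} |⟨E_k ψ, E_l φ⟩|²`, everything is governed by the overlaps
`⟨χ_ℓ ⊗ e_c, ψ⟩` and the Gram matrix of the `g_q`, which is nonzero inside a block and between
partners (`ℓ ≠ ℓ'` from the same basis) in different blocks, and zero otherwise. A nonzero qubit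
is orthogonal to at most one of the four `χ_ℓ`, which leaves room to choose, for any two nonzero
inputs, operators with nonzero overlaps and nonzero Gram entry; for rank-one Kraus operators this
passes to tensor powers by contracting one factor at a time. With a qubit ancilla maximally
entangled with block `i`, resp. `j ≠ i`, the outputs are orthogonal: partners are separated by
`χ_ℓ ⊥ χ_ℓ'`, all other pairs by the Gram matrix.
-/

open Matrix Kronecker

/-- The quantum channel associated with a Kraus family: `ρ ↦ ∑ k, E k * ρ * (E k)ᴴ`. -/
noncomputable def channelApply {ι m n : Type*} [Fintype ι] [Fintype m] [Fintype n]
    (E : ι → Matrix m n ℂ) (ρ : Matrix n n ℂ) : Matrix m m ℂ :=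
  ∑ k, E k * ρ * (E k)ᴴ

/-- The `m`-fold Kronecker tensor power of a Kraus family. -/
noncomputable def krausPow {n d d' : ℕ} (E : Fin n → Matrix (Fin d') (Fin d) ℂ) (m : ℕ) :
    (Fin m → Fin n) → Matrix (Fin m → Fin d') (Fin m → Fin d) ℂ :=
  fun f => Matrix.of fun r c => ∏ i, E (f i) (r i) (c i)

section KrausFamily

variable {ι Ω C : Type*} [Fintype C]

theorem mul_vecMulVec_star_mul_conjTranspose (M : Matrix Ω C ℂ) (ψ : C → ℂ) :
    M * vecMulVec ψ (star ψ) * Mᴴ = vecMulVec (M *ᵥ ψ) (star (M *ᵥ ψ)) := by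
  rw [mul_vecMulVec, vecMulVec_mul, star_mulVec]

variable [Fintype Ω]

theorem star_ofReal_dotProduct_ofReal (u v : Ω → ℝ) :
    star (fun x => (u x : ℂ)) ⬝ᵥ (fun x => (v x : ℂ)) = (u ⬝ᵥ v : ℝ) := by
  simp [dotProduct]

theorem trace_vecMulVec_star_mul_vecMulVec_star (a b : Ω → ℂ) :
    (vecMulVec a (star a) * vecMulVec b (star b)).trace = (Complex.normSq (star a ⬝ᵥ b) : ℂ) := by
  rw [vecMulVec_mul_vecMulVec, trace_vecMulVec, dotProduct_smul, smul_eq_mul, ← Complex.mul_conj,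
    dotProduct_star, dotProduct_comm b]
  rfl

theorem trace_channelApply_mul_channelApply [Fintype ι] (A : ι → Matrix Ω C ℂ) (ψ φ : C → ℂ) :
    (channelApply A (vecMulVec ψ (star ψ)) * channelApply A (vecMulVec φ (star φ))).trace =
      ∑ k, ∑ l, (Complex.normSq (star (A k *ᵥ ψ) ⬝ᵥ (A l *ᵥ φ)) : ℂ) := by
  simp only [channelApply, mul_vecMulVec_star_mul_conjTranspose, Finset.sum_mul_sum, trace_sum,
    trace_vecMulVec_star_mul_vecMulVec_star]

theorem trace_channelApply_mul_channelApply_eq_zero_iff [Fintype ι] (A : ι → Matrix Ω C ℂ)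
    (ψ φ : C → ℂ) :
    (channelApply A (vecMulVec ψ (star ψ)) * channelApply A (vecMulVec φ (star φ))).trace = 0 ↔
      ∀ k l, star (A k *ᵥ ψ) ⬝ᵥ (A l *ᵥ φ) = 0 := by
  have hnonneg (k l) : 0 ≤ Complex.normSq (star (A k *ᵥ ψ) ⬝ᵥ (A l *ᵥ φ)) :=
    Complex.normSq_nonneg _
  simp_rw [trace_channelApply_mul_channelApply, ← Complex.ofReal_sum, Complex.ofReal_eq_zero,
    Finset.sum_eq_zero_iff_of_nonneg (fun k _ => Finset.sum_nonneg fun l _ => hnonneg k l),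
    Finset.sum_eq_zero_iff_of_nonneg (fun l _ => hnonneg _ l), Finset.mem_univ, true_implies,
    Complex.normSq_eq_zero]

/-- The paper's `α = 1`, by `trace_channelApply_mul_channelApply_eq_zero_iff`. -/
def NoOrthogonalOutputs (A : ι → Matrix Ω C ℂ) : Prop :=
  ∀ ψ φ : C → ℂ, ψ ≠ 0 → φ ≠ 0 → ∃ k l, star (A k *ᵥ ψ) ⬝ᵥ (A l *ᵥ φ) ≠ 0

theorem star_vecMulVec_mulVec_dotProduct (g g' : Ω → ℂ) (e e' ψ φ : C → ℂ) :
    star (vecMulVec g e *ᵥ ψ) ⬝ᵥ (vecMulVec g' e' *ᵥ φ) =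
      star (e ⬝ᵥ ψ) * (e' ⬝ᵥ φ) * (star g ⬝ᵥ g') := by
  simp only [vecMulVec_mulVec, op_smul_eq_smul, star_smul, smul_dotProduct, dotProduct_smul,
    smul_eq_mul]
  ring

theorem noOrthogonalOutputs_vecMulVec_iff (g : ι → Ω → ℂ) (e : ι → C → ℂ) :
    NoOrthogonalOutputs (fun k => vecMulVec (g k) (e k)) ↔
      ∀ ψ φ : C → ℂ, ψ ≠ 0 → φ ≠ 0 →
        ∃ k l, e k ⬝ᵥ ψ ≠ 0 ∧ e l ⬝ᵥ φ ≠ 0 ∧ star (g k) ⬝ᵥ g l ≠ 0 := by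
  simp only [NoOrthogonalOutputs, star_vecMulVec_mulVec_dotProduct, ne_eq, mul_eq_zero,
    star_eq_zero, not_or, and_assoc]

end KrausFamily

section TensorPower

variable {X : Type*} [Fintype X]

def tensorVec {m : ℕ} (v : Fin m → X → ℂ) : (Fin m → X) → ℂ :=
  fun x => ∏ i, v i (x i)

theorem star_tensorVec_dotProduct_tensorVec {m : ℕ} (u v : Fin m → X → ℂ) :
    star (tensorVec u) ⬝ᵥ tensorVec v = ∏ i, star (u i) ⬝ᵥ v i := by
  simp only [dotProduct, tensorVec, Pi.star_apply, star_prod, ← Finset.prod_mul_distrib]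
  exact (Fintype.prod_sum fun i x => star (u i x) * v i x).symm

theorem tensorVec_cons_dotProduct {m : ℕ} (a : X → ℂ) (u : Fin m → X → ℂ)
    (ψ : (Fin (m + 1) → X) → ℂ) :
    tensorVec (Fin.cons a u : Fin (m + 1) → X → ℂ) ⬝ᵥ ψ =
      tensorVec u ⬝ᵥ fun s => a ⬝ᵥ fun x => ψ (Fin.cons x s) := by
  simp only [dotProduct, ← (Fin.consEquiv fun _ : Fin (m + 1) => X).sum_comp, Fintype.sum_prod_type,
    Finset.mul_sum]
  rw [Finset.sum_comm]
  refine Fintype.sum_congr _ _ fun s => Fintype.sum_congr _ _ fun x => ?_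
  simp [tensorVec, Fin.consEquiv, Fin.prod_univ_succ]
  ring

theorem krausPow_vecMulVec {n D d' : ℕ} (g : Fin n → Fin d' → ℂ) (e : Fin n → Fin D → ℂ)
    (m : ℕ) (f : Fin m → Fin n) :
    krausPow (fun k => vecMulVec (g k) (e k)) m f =
      vecMulVec (tensorVec (g ∘ f)) (tensorVec (e ∘ f)) := by
  ext r c
  simp [krausPow, tensorVec, vecMulVec_apply, Finset.prod_mul_distrib]

theorem exists_tensorVec_dotProduct_ne_zero {ι : Type*} {R : ι → ι → Prop} {e : ι → X → ℂ}
    (h : ∀ ψ φ : X → ℂ, ψ ≠ 0 → φ ≠ 0 → ∃ k l, e k ⬝ᵥ ψ ≠ 0 ∧ e l ⬝ᵥ φ ≠ 0 ∧ R k l) :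
    ∀ {m : ℕ} (ψ φ : (Fin m → X) → ℂ), ψ ≠ 0 → φ ≠ 0 →
      ∃ kv lv : Fin m → ι, tensorVec (e ∘ kv) ⬝ᵥ ψ ≠ 0 ∧ tensorVec (e ∘ lv) ⬝ᵥ φ ≠ 0 ∧
        ∀ i, R (kv i) (lv i)
  | 0, ψ, φ, hψ, hφ => by
    refine ⟨finZeroElim, finZeroElim, ?_, ?_, finZeroElim⟩
    · simpa [tensorVec, dotProduct, funext_iff, Unique.forall_iff] using hψ
    · simpa [tensorVec, dotProduct, funext_iff, Unique.forall_iff] using hφ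
  | m + 1, ψ, φ, hψ, hφ => by
    have slice : ∀ χ : (Fin (m + 1) → X) → ℂ, χ ≠ 0 →
        ∃ s : Fin m → X, (fun x => χ (Fin.cons x s)) ≠ 0 := by
      intro χ hχ
      obtain ⟨x, hx⟩ := Function.ne_iff.mp hχ
      exact ⟨Fin.tail x, Function.ne_iff.mpr ⟨x 0, by simpa using hx⟩⟩
    obtain ⟨s, hs⟩ := slice ψ hψ
    obtain ⟨t, ht⟩ := slice φ hφ
    obtain ⟨k, l, hk, hl, hkl⟩ := h _ _ hs ht
    obtain ⟨kv, lv, hkv, hlv, hR⟩ :=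
      exists_tensorVec_dotProduct_ne_zero h (fun s => e k ⬝ᵥ fun x => ψ (Fin.cons x s))
        (fun t => e l ⬝ᵥ fun x => φ (Fin.cons x t))
        (Function.ne_iff.mpr ⟨s, hk⟩) (Function.ne_iff.mpr ⟨t, hl⟩)
    refine ⟨Fin.cons k kv, Fin.cons l lv, ?_, ?_, Fin.cases hkl hR⟩
    · rwa [Fin.comp_cons, tensorVec_cons_dotProduct]
    · rwa [Fin.comp_cons, tensorVec_cons_dotProduct]

theorem NoOrthogonalOutputs.krausPow {n D d' : ℕ} {A : Fin n → Matrix (Fin d') (Fin D) ℂ}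
    (hA : ∀ k, ∃ g e, A k = vecMulVec g e) (h : NoOrthogonalOutputs A) (m : ℕ) :
    NoOrthogonalOutputs (krausPow A m) := by
  choose g e hge using hA
  obtain rfl : A = fun k => vecMulVec (g k) (e k) := funext hge
  rw [noOrthogonalOutputs_vecMulVec_iff] at h
  intro ψ φ hψ hφ
  obtain ⟨kv, lv, hkv, hlv, hR⟩ := exists_tensorVec_dotProduct_ne_zero h ψ φ hψ hφ
  refine ⟨kv, lv, ?_⟩
  rw [krausPow_vecMulVec, krausPow_vecMulVec, star_vecMulVec_mulVec_dotProduct,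
    star_tensorVec_dotProduct_tensorVec]
  exact mul_ne_zero (mul_ne_zero (star_ne_zero.mpr hkv) hlv)
    (Finset.prod_ne_zero_iff.mpr fun i _ => hR i)

end TensorPower

section Reindex

variable {ι Ω C ι' Ω' C' : Type*}

def reindexKraus (eι : ι ≃ ι') (eΩ : Ω ≃ Ω') (eC : C ≃ C') (A : ι → Matrix Ω C ℂ) (k : ι') :
    Matrix Ω' C' ℂ :=
  reindex eΩ eC (A (eι.symm k))

variable [Fintype Ω] [Fintype Ω'] (eι : ι ≃ ι') (eΩ : Ω ≃ Ω') (eC : C ≃ C')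

theorem conjTranspose_reindexKraus_mul (A : ι → Matrix Ω C ℂ) (k l : ι') :
    (reindexKraus eι eΩ eC A k)ᴴ * reindexKraus eι eΩ eC A l =
      reindex eC eC ((A (eι.symm k))ᴴ * A (eι.symm l)) := by
  simp only [reindexKraus, reindex_apply, conjTranspose_submatrix, submatrix_mul_equiv]

theorem sum_conjTranspose_mul_reindexKraus [Fintype ι] [Fintype ι'] (A : ι → Matrix Ω C ℂ) :
    ∑ k, (reindexKraus eι eΩ eC A k)ᴴ * reindexKraus eι eΩ eC A k =
      reindex eC eC (∑ q, (A q)ᴴ * A q) := by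
  ext x y
  simp only [conjTranspose_reindexKraus_mul, reindex_apply, Matrix.sum_apply, submatrix_apply]
  exact eι.symm.sum_comp fun q => ((A q)ᴴ * A q) (eC.symm x) (eC.symm y)

theorem NoOrthogonalOutputs.reindexKraus [Fintype C] [Fintype C'] {A : ι → Matrix Ω C ℂ}
    (h : NoOrthogonalOutputs A) : NoOrthogonalOutputs (reindexKraus eι eΩ eC A) := by
  intro ψ φ hψ hφ
  obtain ⟨k, l, hkl⟩ := h (ψ ∘ eC) (φ ∘ eC)
    (fun h0 => hψ (funext fun x => by simpa using congrFun h0 (eC.symm x)))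
    (fun h0 => hφ (funext fun x => by simpa using congrFun h0 (eC.symm x)))
  refine ⟨eι k, eι l, ?_⟩
  simp only [_root_.reindexKraus, reindex_apply, submatrix_mulVec_equiv, Equiv.symm_apply_apply,
    Equiv.symm_symm]
  rw [dotProduct, ← eΩ.sum_comp]
  simpa [Function.comp_def, dotProduct] using hkl

end Reindex

section Bell

theorem inv_sqrt_two_mul_self : ((√2 : ℝ) : ℂ)⁻¹ * ((√2 : ℝ) : ℂ)⁻¹ = 2⁻¹ := by
  rw [← mul_inv, ← Complex.ofReal_mul, Real.mul_self_sqrt zero_le_two, Complex.ofReal_ofNat]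

variable {Ω C : Type*} [Fintype C] [DecidableEq C]

noncomputable def bellVec (f : Fin 2 → C) : Fin 2 × C → ℂ :=
  fun p => if p.2 = f p.1 then ((√2 : ℝ) : ℂ)⁻¹ else 0

theorem star_bellVec_dotProduct_self (f : Fin 2 → C) : star (bellVec f) ⬝ᵥ bellVec f = 1 := by
  simp [bellVec, dotProduct, Fintype.sum_prod_type, inv_sqrt_two_mul_self]

theorem one_kronecker_mulVec_bellVec (A : Matrix Ω C ℂ) (f : Fin 2 → C) :
    ((1 : Matrix (Fin 2) (Fin 2) ℂ) ⊗ₖ A) *ᵥ bellVec f =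
      fun p => ((√2 : ℝ) : ℂ)⁻¹ * A p.2 (f p.1) := by
  ext ⟨s, o⟩
  simp [bellVec, mulVec, dotProduct, Fintype.sum_prod_type, one_apply, mul_comm]

theorem star_one_kronecker_mulVec_bellVec_dotProduct [Fintype Ω] (A B : Matrix Ω C ℂ)
    (f f' : Fin 2 → C) :
    star (((1 : Matrix (Fin 2) (Fin 2) ℂ) ⊗ₖ A) *ᵥ bellVec f) ⬝ᵥ
        (((1 : Matrix (Fin 2) (Fin 2) ℂ) ⊗ₖ B) *ᵥ bellVec f') =
      2⁻¹ * ∑ s, (Aᴴ * B) (f s) (f' s) := by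
  rw [one_kronecker_mulVec_bellVec, one_kronecker_mulVec_bellVec]
  simp only [dotProduct, Fintype.sum_prod_type, mul_apply, Finset.mul_sum, Pi.star_apply,
    star_mul', Complex.star_def, map_inv₀, Complex.conj_ofReal, conjTranspose_apply]
  refine Finset.sum_congr rfl fun s _ => Finset.sum_congr rfl fun o _ => ?_
  linear_combination (starRingEnd ℂ (A o (f s)) * B o (f' s)) * inv_sqrt_two_mul_self

end Bell

theorem exists_notMem_of_subsingleton {α : Type*} [Finite α] (h : 2 < Nat.card α) {s t : Set α}
    (hs : s.Subsingleton) (ht : t.Subsingleton) : ∃ a, a ∉ s ∧ a ∉ t := by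
  by_contra! H
  have hcover : (Set.univ : Set α) ⊆ s ∪ t := fun a _ => (em (a ∈ s)).imp_right (H a)
  have := (Set.ncard_le_ncard hcover).trans (Set.ncard_union_le s t)
  rw [Set.ncard_univ] at this
  have := Set.ncard_le_one_iff_subsingleton.mpr hs
  have := Set.ncard_le_one_iff_subsingleton.mpr ht
  omega

section Construction

/-- `qubitVec (p, σ)` is the `σ`-th vector of the computational basis (`p = 0`) or of the
unnormalised Hadamard basis (`p = 1`). -/
def qubitVec (ℓ : Fin 2 × Fin 2) : Fin 2 → ℂ :=
  ![![![1, 0], ![0, 1]], ![![1, 1], ![1, -1]]] ℓ.1 ℓ.2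

theorem star_qubitVec (ℓ : Fin 2 × Fin 2) : star (qubitVec ℓ) = qubitVec ℓ := by
  ext s
  fin_cases ℓ <;> fin_cases s <;> simp [qubitVec]

theorem qubitVec_dotProduct_qubitVec_of_ne (p : Fin 2) {σ σ' : Fin 2} (h : σ ≠ σ') :
    qubitVec (p, σ) ⬝ᵥ qubitVec (p, σ') = 0 := by
  fin_cases p <;> fin_cases σ <;> fin_cases σ' <;> simp_all [qubitVec, dotProduct]

theorem sum_qubitVec_mul_qubitVec (s t : Fin 2) :
    ∑ ℓ, qubitVec ℓ s * qubitVec ℓ t = if s = t then 3 else 0 := by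
  fin_cases s <;> fin_cases t <;> norm_num [qubitVec, Fintype.sum_prod_type]

theorem subsingleton_qubitVec_dotProduct_eq_zero {u : Fin 2 → ℂ} (hu : u ≠ 0) :
    {ℓ | qubitVec ℓ ⬝ᵥ u = 0}.Subsingleton := by
  intro ℓ₁ h₁ ℓ₂ h₂
  by_contra hne
  refine hu (eq_zero_of_mulVec_eq_zero (M := of ![qubitVec ℓ₁, qubitVec ℓ₂]) ?_ ?_)
  · fin_cases ℓ₁ <;> fin_cases ℓ₂ <;> simp_all [det_fin_two, qubitVec]
    all_goals norm_num
  · ext i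
    fin_cases i
    exacts [h₁, h₂]

variable {d : ℕ}

/-- For `σ = 1` these are the columns of the Householder reflection `1 - (2 / d) J`: orthonormal,
yet each overlaps every `e_c'` with `c' ≠ c`. -/
noncomputable def blockVec (d : ℕ) (σ : Fin 2) (c : Fin d) : Fin d → ℝ :=
  fun c' => (if c' = c then 1 else 0) - (σ : ℕ) * (2 / d : ℝ)

theorem blockVec_dotProduct (σ σ' : Fin 2) (c c' : Fin d) :
    blockVec d σ c ⬝ᵥ blockVec d σ' c' =
      (if c = c' then 1 else 0) - if σ = σ' then 0 else (2 / d : ℝ) := by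
  have hd : (d : ℝ) ≠ 0 := by have := c.pos; positivity
  simp only [blockVec, dotProduct, sub_mul, mul_sub, Finset.sum_sub_distrib, ite_mul, one_mul,
    zero_mul, mul_ite, mul_one, mul_zero, Finset.sum_ite_eq', Finset.mem_univ, if_true,
    Finset.sum_const, Finset.card_univ, Fintype.card_fin, nsmul_eq_mul]
  fin_cases σ <;> fin_cases σ' <;> simp [eq_comm (a := c')]
  all_goals field_simp
  all_goals ring

abbrev OutIdx (d : ℕ) := (Fin d × Fin 2 × Fin 2) ⊕ Fin d ⊕ (Fin 2 × Fin d)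

/-- The three components have unit norm, so `‖outVec d q‖² = 1 / 3`, which compensates
`∑ ℓ, χ_ℓ χ_ℓᵀ = 3`. -/
noncomputable def outVec (d : ℕ) (q : Fin d × Fin 2 × Fin 2) : OutIdx d → ℝ :=
  (3⁻¹ : ℝ) • Sum.elim (Pi.single q 1)
    (Sum.elim (Pi.single q.1 1) fun x => if x.1 = q.2.1 then blockVec d q.2.2 q.1 x.2 else 0)

theorem outVec_dotProduct (q q' : Fin d × Fin 2 × Fin 2) :
    outVec d q ⬝ᵥ outVec d q' = 9⁻¹ * ((if q = q' then 1 else 0) + (if q.1 = q'.1 then 1 else 0) +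
      if q.2.1 = q'.2.1 then blockVec d q.2.2 q.1 ⬝ᵥ blockVec d q'.2.2 q'.1 else 0) := by
  have third (p p' : Fin 2) (b b' : Fin d → ℝ) :
      ((fun x : Fin 2 × Fin d => if x.1 = p then b x.2 else 0) ⬝ᵥ
        fun x => if x.1 = p' then b' x.2 else 0) = if p = p' then b ⬝ᵥ b' else 0 := by
    fin_cases p <;> fin_cases p' <;> simp [dotProduct, Fintype.sum_prod_type]
  simp only [outVec, smul_dotProduct, dotProduct_smul, sumElim_dotProduct_sumElim,
    single_dotProduct, Pi.single_apply, smul_eq_mul, one_mul, third]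
  ring

theorem outVec_dotProduct_self (q : Fin d × Fin 2 × Fin 2) : outVec d q ⬝ᵥ outVec d q = 3⁻¹ := by
  rw [outVec_dotProduct, blockVec_dotProduct]
  norm_num

theorem outVec_dotProduct_eq_zero {q q' : Fin d × Fin 2 × Fin 2} (hc : q.1 ≠ q'.1)
    (hℓ : ¬(q.2.1 = q'.2.1 ∧ q.2.2 ≠ q'.2.2)) : outVec d q ⬝ᵥ outVec d q' = 0 := by
  have hq : q ≠ q' := fun h => hc (congrArg Prod.fst h)
  rw [outVec_dotProduct, blockVec_dotProduct]
  by_cases hp : q.2.1 = q'.2.1 <;> simp_all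

theorem outVec_dotProduct_ne_zero (hd : 2 ≤ d) {q q' : Fin d × Fin 2 × Fin 2}
    (h : q.1 = q'.1 ∨ q.2.1 = q'.2.1 ∧ q.2.2 ≠ q'.2.2) : outVec d q ⬝ᵥ outVec d q' ≠ 0 := by
  have hd' : (2 / d : ℝ) ≤ 1 := by
    rw [div_le_one (by positivity)]
    exact_mod_cast hd
  rw [outVec_dotProduct, blockVec_dotProduct]
  apply mul_ne_zero (by norm_num)
  rcases h with hc | ⟨hp, hσ⟩
  · refine ne_of_gt ?_
    split_ifs <;> simp_all <;> linarith
  · have hq : q ≠ q' := fun h => hσ (by rw [h])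
    by_cases hc : q.1 = q'.1 <;> simp [hq, hc, hp, hσ]
    · linarith
    · positivity

def inVec (q : Fin d × Fin 2 × Fin 2) : Fin 2 × Fin d → ℂ :=
  fun x => if x.2 = q.1 then qubitVec q.2 x.1 else 0

theorem star_inVec (q : Fin d × Fin 2 × Fin 2) : star (inVec q) = inVec q := by
  ext x
  simp only [Pi.star_apply, inVec]
  split_ifs
  exacts [congrFun (star_qubitVec q.2) x.1, star_zero _]

theorem inVec_dotProduct (q : Fin d × Fin 2 × Fin 2) (ψ : Fin 2 × Fin d → ℂ) :
    inVec q ⬝ᵥ ψ = qubitVec q.2 ⬝ᵥ fun s => ψ (s, q.1) := by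
  simp [inVec, dotProduct, Fintype.sum_prod_type, ite_mul]

noncomputable def krausOp (d : ℕ) (q : Fin d × Fin 2 × Fin 2) :
    Matrix (OutIdx d) (Fin 2 × Fin d) ℂ :=
  vecMulVec (fun ω => (outVec d q ω : ℂ)) (inVec q)

theorem conjTranspose_krausOp_mul_apply (q q' : Fin d × Fin 2 × Fin 2) (x y : Fin 2 × Fin d) :
    ((krausOp d q)ᴴ * krausOp d q') x y =
      (outVec d q ⬝ᵥ outVec d q' : ℝ) * (inVec q x * inVec q' y) := by
  simp only [krausOp, conjTranspose_vecMulVec, vecMulVec_mul_vecMulVec, vecMulVec_apply,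
    Pi.smul_apply, smul_eq_mul, star_ofReal_dotProduct_ofReal, star_inVec]
  ring

theorem sum_conjTranspose_krausOp_mul_self : ∑ q, (krausOp d q)ᴴ * krausOp d q = 1 := by
  ext x y
  simp only [Matrix.sum_apply, conjTranspose_krausOp_mul_apply, outVec_dotProduct_self]
  rw [← Finset.mul_sum, Fintype.sum_prod_type]
  by_cases h₂ : x.2 = y.2
  · simp [inVec, one_apply, Prod.ext_iff, h₂, sum_qubitVec_mul_qubitVec]
  · simp [inVec, one_apply, Prod.ext_iff, h₂]

theorem sum_conjTranspose_krausOp_mul_apply_eq_zero {i j : Fin d} (hij : i ≠ j)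
    (q q' : Fin d × Fin 2 × Fin 2) : ∑ s, ((krausOp d q)ᴴ * krausOp d q') (s, i) (s, j) = 0 := by
  simp only [conjTranspose_krausOp_mul_apply, ← Finset.mul_sum]
  by_cases hq : q.1 = i ∧ q'.1 = j
  · obtain ⟨rfl, rfl⟩ := hq
    by_cases hℓ : q.2.1 = q'.2.1 ∧ q.2.2 ≠ q'.2.2
    · obtain ⟨c, p, σ⟩ := q
      obtain ⟨c', p', σ'⟩ := q'
      obtain ⟨rfl, hσ⟩ := hℓ
      apply mul_eq_zero_of_right
      simp only [inVec, if_true]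
      exact qubitVec_dotProduct_qubitVec_of_ne p hσ
    · rw [outVec_dotProduct_eq_zero hij hℓ, Complex.ofReal_zero, zero_mul]
  · refine mul_eq_zero_of_right _ (Finset.sum_eq_zero fun s _ => ?_)
    simp only [inVec]
    split_ifs <;> simp_all

theorem noOrthogonalOutputs_krausOp (hd : 2 ≤ d) : NoOrthogonalOutputs (krausOp d) := by
  have block (χ : Fin 2 × Fin d → ℂ) (hχ : χ ≠ 0) : ∃ c, (fun s => χ (s, c)) ≠ 0 := by
    obtain ⟨x, hx⟩ := Function.ne_iff.mp hχ
    exact ⟨x.2, Function.ne_iff.mpr ⟨x.1, hx⟩⟩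
  unfold krausOp
  rw [noOrthogonalOutputs_vecMulVec_iff]
  intro ψ φ hψ hφ
  obtain ⟨c, hc⟩ := block ψ hψ
  obtain ⟨c', hc'⟩ := block φ hφ
  have hB := subsingleton_qubitVec_dotProduct_eq_zero hc
  have hB' := subsingleton_qubitVec_dotProduct_eq_zero hc'
  have hcard : 2 < Nat.card (Fin 2 × Fin 2) := by simp
  simp only [inVec_dotProduct, star_ofReal_dotProduct_ofReal, ne_eq, Complex.ofReal_eq_zero]
  by_cases hcc : c = c'
  · obtain ⟨ℓ, hℓ, -⟩ := exists_notMem_of_subsingleton hcard hB hB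
    obtain ⟨ℓ', hℓ', -⟩ := exists_notMem_of_subsingleton hcard hB' hB'
    exact ⟨(c, ℓ), (c', ℓ'), hℓ, hℓ', outVec_dotProduct_ne_zero hd (Or.inl hcc)⟩
  · have partner_inj : Function.Injective fun ℓ : Fin 2 × Fin 2 => (ℓ.1, ℓ.2 + 1) :=
      fun a b h => by simpa [Prod.ext_iff] using h
    obtain ⟨ℓ, hℓ, hℓ'⟩ := exists_notMem_of_subsingleton hcard hB (hB'.preimage partner_inj)
    exact ⟨(c, ℓ), (c', (ℓ.1, ℓ.2 + 1)), hℓ, hℓ',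
      outVec_dotProduct_ne_zero hd (Or.inr ⟨rfl, by simp⟩)⟩

end Construction

/-- for every `d ≥ 2` there is an entanglement-breaking channel `E` on
`ℂ^{2d}` (all Kraus operators of rank ≤ 1) with `α(E^{⊗m}) = 1` for all `m ≥ 1`
(hence `C⁰(E) = 0`), yet `id₂ ⊗ E` admits `d` unit inputs with pairwise orthogonal
outputs, so `C⁰(id₂ ⊗ E) ≥ log₂ d`. -/
theorem stmt_12 (d : ℕ) (hd : 2 ≤ d) :
    ∃ (d' n : ℕ) (E : Fin n → Matrix (Fin d') (Fin (2 * d)) ℂ),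
      (∑ k, (E k)ᴴ * E k = 1) ∧
      (∀ k, (E k).rank ≤ 1) ∧
      (∀ m, 1 ≤ m → ∀ ψ φ : (Fin m → Fin (2 * d)) → ℂ,
        star ψ ⬝ᵥ ψ = 1 → star φ ⬝ᵥ φ = 1 →
        (channelApply (krausPow E m) (vecMulVec ψ (star ψ)) *
          channelApply (krausPow E m) (vecMulVec φ (star φ))).trace ≠ 0) ∧
      (∃ v : Fin d → (Fin 2 × Fin (2 * d)) → ℂ,
        (∀ i, star (v i) ⬝ᵥ v i = 1) ∧
        ∀ i j, i ≠ j →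
          (channelApply (fun k => (1 : Matrix (Fin 2) (Fin 2) ℂ) ⊗ₖ E k)
              (vecMulVec (v i) (star (v i))) *
            channelApply (fun k => (1 : Matrix (Fin 2) (Fin 2) ℂ) ⊗ₖ E k)
              (vecMulVec (v j) (star (v j)))).trace = 0) := by
  refine ⟨_, _, reindexKraus (Fintype.equivFin _) (Fintype.equivFin _) finProdFinEquiv (krausOp d),
    ?_, fun k => ?_, fun m _ ψ φ hψ hφ => ?_,
    fun i => bellVec fun s => finProdFinEquiv (s, i), fun i => star_bellVec_dotProduct_self _,
    fun i j hij => ?_⟩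
  · rw [sum_conjTranspose_mul_reindexKraus, sum_conjTranspose_krausOp_mul_self]
    simp
  · rw [reindexKraus, rank_reindex]
    exact rank_vecMulVec_le _ _
  · obtain ⟨k, l, hkl⟩ :=
      ((noOrthogonalOutputs_krausOp hd).reindexKraus _ _ _).krausPow (fun _ => ⟨_, _, rfl⟩) m
        ψ φ (by rintro rfl; simp at hψ) (by rintro rfl; simp at hφ)
    rw [Ne, trace_channelApply_mul_channelApply_eq_zero_iff]
    exact fun h => hkl (h k l)
  · rw [trace_channelApply_mul_channelApply_eq_zero_iff]
    intro k l
    rw [star_one_kronecker_mulVec_bellVec_dotProduct, conjTranspose_reindexKraus_mul]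
    simp only [reindex_apply, submatrix_apply, Equiv.symm_apply_apply]
    rw [sum_conjTranspose_krausOp_mul_apply_eq_zero hij, mul_zero]
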